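/- arXiv:1510.00250 — 5 statements merged into one kernel-verified Lean document; each statement's English description precedes it below -/
import Mathlib

section
/- For every v ∈ ℂ^d, the operator Ξ_v is an algebra homomorphism for the convolution product, i.e. Ξ_v(γ★δ) = (Ξ_v γ)★(Ξ_v δ) for all γ, δ ∈ ℂ^W; moreover Ξ_v maps G into G and maps 𝔤 into 𝔤. -/
open scoped BigOperators

/-- Convolution product on `ℂ^W`: `(δ★δ′)_w = Σ_{w=w₁w₂} δ_{w₁} δ′_{w₂}`. -/
noncomputable def conv {A : Type*} (x y : List A → ℂ) : List A → ℂ :=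
  fun w => ∑ i ∈ Finset.range (w.length + 1), x (w.take i) * y (w.drop i)

/-- Shuffle product of two words, as a multiset of words. -/
def shuffle {A : Type*} : List A → List A → Multiset (List A)
  | [], w => {w}
  | w, [] => {w}
  | a :: u, b :: v =>
      ((shuffle u (b :: v)).map (a :: ·)) + ((shuffle (a :: u) v).map (b :: ·))

/-- Membership in the group `G`: the shuffle relations with `γ_∅ = 1`. -/
def isGrp {A : Type*} (γ : List A → ℂ) : Prop :=
  γ [] = 1 ∧ ∀ w w' : List A, γ w * γ w' = ((shuffle w w').map γ).sum

/-- Membership in the Lie algebra `𝔤`. -/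
def isLie {A : Type*} (β : List A → ℂ) : Prop :=
  β [] = 0 ∧ ∀ w w' : List A, w ≠ [] → w' ≠ [] → ((shuffle w w').map β).sum = 0

/-- The unit `1` of the convolution product. -/
def unitCW {A : Type*} : List A → ℂ := fun w => match w with | [] => 1 | _ => 0

/-- `ν^v_ℓ = Σ_j v_j ν_{j,ℓ}` for a letter `ℓ`. -/
noncomputable def nuL {A : Type*} {d : ℕ} (ν : Fin d → A → ℂ) (v : Fin d → ℂ) (ℓ : A) : ℂ :=
  ∑ j, v j * ν j ℓ

/-- `ν^v_w = ν^v_{ℓ₁} + ⋯ + ν^v_{ℓ_n}` for a word `w = ℓ₁⋯ℓ_n`. -/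
noncomputable def nuW {A : Type*} {d : ℕ} (ν : Fin d → A → ℂ) (v : Fin d → ℂ) (w : List A) : ℂ :=
  (w.map (nuL ν v)).sum

/-- The operator `Ξ_v`: `(Ξ_v δ)_w = exp(ν^v_w) δ_w`. -/
noncomputable def XiOp {A : Type*} {d : ℕ} (ν : Fin d → A → ℂ) (v : Fin d → ℂ)
    (δ : List A → ℂ) : List A → ℂ :=
  fun w => Complex.exp (nuW ν v w) * δ w

/-- The operator `ξ_v`: `(ξ_v δ)_w = ν^v_w δ_w`. -/
noncomputable def xiOp {A : Type*} {d : ℕ} (ν : Fin d → A → ℂ) (v : Fin d → ℂ)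
    (δ : List A → ℂ) : List A → ℂ :=
  fun w => nuW ν v w * δ w

/-! `Ξ_v` multiplies the coefficient of `w` by `exp ν^v_w`, which is multiplicative under
concatenation and takes the same value `exp ν^v_w · exp ν^v_w'` on every shuffle of `w` and `w'`,
since shuffles are permutations of `w ++ w'`. Both the convolution and the shuffle relations
therefore just pick up these scalar factors. -/

theorem perm_append_of_mem_shuffle {A : Type*} :
    ∀ {w w' u : List A}, u ∈ shuffle w w' → u.Perm (w ++ w')
  | [], w', u, hu => by simp_all [shuffle]
  | _ :: _, [], u, hu => by simp_all [shuffle]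
  | a :: w, b :: w', u, hu => by
      simp only [shuffle, Multiset.mem_add, Multiset.mem_map] at hu
      rcases hu with ⟨x, hx, rfl⟩ | ⟨x, hx, rfl⟩
      · exact (perm_append_of_mem_shuffle hx).cons a
      · exact ((perm_append_of_mem_shuffle hx).cons b).trans List.perm_middle.symm

section Xi

variable {A : Type*} {d : ℕ} (ν : Fin d → A → ℂ) (v : Fin d → ℂ)

theorem nuW_append (w w' : List A) : nuW ν v (w ++ w') = nuW ν v w + nuW ν v w' := by
  simp [nuW]

theorem nuW_of_mem_shuffle {w w' u : List A} (hu : u ∈ shuffle w w') :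
    nuW ν v u = nuW ν v w + nuW ν v w' := by
  rw [← nuW_append, nuW, nuW, ((perm_append_of_mem_shuffle hu).map _).sum_eq]

theorem sum_shuffle_XiOp (β : List A → ℂ) (w w' : List A) :
    ((shuffle w w').map (XiOp ν v β)).sum
      = Complex.exp (nuW ν v w) * Complex.exp (nuW ν v w') * ((shuffle w w').map β).sum := by
  rw [← Complex.exp_add, ← Multiset.sum_map_mul_left]
  refine congrArg Multiset.sum (Multiset.map_congr rfl fun u hu => ?_)
  rw [XiOp, nuW_of_mem_shuffle ν v hu]

theorem XiOp_conv (γ δ : List A → ℂ) :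
    XiOp ν v (conv γ δ) = conv (XiOp ν v γ) (XiOp ν v δ) := by
  funext w
  simp only [XiOp, conv, Finset.mul_sum]
  refine Finset.sum_congr rfl fun i _ => ?_
  rw [← List.take_append_drop i w, nuW_append, Complex.exp_add, List.take_append_drop]
  ring

theorem XiOp_nil (δ : List A → ℂ) : XiOp ν v δ [] = δ [] := by
  simp [XiOp, nuW]

theorem isGrp_XiOp {γ : List A → ℂ} (hγ : isGrp γ) : isGrp (XiOp ν v γ) := by
  refine ⟨by rw [XiOp_nil, hγ.1], fun w w' => ?_⟩
  rw [sum_shuffle_XiOp, ← hγ.2, XiOp, XiOp]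
  ring

theorem isLie_XiOp {β : List A → ℂ} (hβ : isLie β) : isLie (XiOp ν v β) :=
  ⟨by rw [XiOp_nil, hβ.1], fun w w' hw hw' => by rw [sum_shuffle_XiOp, hβ.2 w w' hw hw', mul_zero]⟩

end Xi

theorem stmt3_general {A : Type*} {d : ℕ}
    (ν : Fin d → A → ℂ) (v : Fin d → ℂ) :
    (∀ γ δ : List A → ℂ, XiOp ν v (conv γ δ) = conv (XiOp ν v γ) (XiOp ν v δ)) ∧
    (∀ γ : List A → ℂ, isGrp γ → isGrp (XiOp ν v γ)) ∧
    (∀ β : List A → ℂ, isLie β → isLie (XiOp ν v β)) :=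
  ⟨XiOp_conv ν v, fun _ => isGrp_XiOp ν v, fun _ => isLie_XiOp ν v⟩

/-- `Ξ_v` is a homomorphism for the convolution product and maps
`G` into `G` and `𝔤` into `𝔤`. -/
theorem stmt3 {A : Type*} [Countable A] {d : ℕ} (hd : 1 ≤ d)
    (ν : Fin d → A → ℂ) (v : Fin d → ℂ) :
    (∀ γ δ : List A → ℂ, XiOp ν v (conv γ δ) = conv (XiOp ν v γ) (XiOp ν v δ)) ∧
    (∀ γ : List A → ℂ, isGrp γ → isGrp (XiOp ν v γ)) ∧
    (∀ β : List A → ℂ, isLie β → isLie (XiOp ν v β)) :=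
  stmt3_general ν v
end

section
/- Let λ_ℓ : ℝ → ℂ be continuous functions, one for each letter ℓ ∈ A. For t ∈ ℝ define α(t) ∈ ℂ^W by α(t)_∅ = 1 and, for a nonempty word ℓ₁⋯ℓ_n, α(t)_{ℓ₁⋯ℓ_n} = ∫₀^t dt_n λ_{ℓ_n}(t_n) ∫₀^{t_n} dt_{n−1} λ_{ℓ_{n−1}}(t_{n−1}) ⋯ ∫₀^{t₂} dt₁ λ_{ℓ₁}(t₁). Then α(t) ∈ G for every t ∈ ℝ, i.e. the iterated-integral coefficients satisfy the shuffle relations. -/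
open scoped BigOperators

/-- Iterated integrals, with the word given in reversed order (outermost integration
variable paired with the head letter):
`iterInt λ [ℓ_n,…,ℓ₁] t = ∫₀^t λ_{ℓ_n}(s) · iterInt λ [ℓ_{n−1},…,ℓ₁] s ds`. -/
noncomputable def iterInt {A : Type*} (lam : A → ℝ → ℂ) : List A → ℝ → ℂ
  | [], _ => 1
  | ℓ :: w, t => ∫ s in (0:ℝ)..t, lam ℓ s * iterInt lam w s

/-!
Differentiating in `t`, the derivative of the iterated integral over `ℓ :: w` is `λ_ℓ` times the
one over `w`, which matches the recursion of the shuffle product on first letters. Hence, by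
induction on the two words, the product `α_u α_v` and the shuffle sum have equal derivatives once
the relation is known for shorter words, and both vanish at `t = 0`. Since `iterInt` reads words
backwards, one also needs that shuffling commutes with reversal.
-/

section Shuffle

variable {A : Type*}

@[simp]
lemma shuffle_nil_left (w : List A) : shuffle [] w = {w} := by
  cases w <;> simp [shuffle]

@[simp]
lemma shuffle_nil_right (w : List A) : shuffle w [] = {w} := by
  cases w <;> simp [shuffle]

lemma shuffle_append_singleton (a b : A) : ∀ x y : List A,
    shuffle (x ++ [a]) (y ++ [b]) =
      (shuffle x (y ++ [b])).map (· ++ [a]) + (shuffle (x ++ [a]) y).map (· ++ [b])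
  | [], [] => by
      simpa [shuffle] using Multiset.pair_comm _ _
  | [], c :: y => by
      have ih := shuffle_append_singleton a b [] y
      simp only [List.nil_append] at ih
      simp [shuffle, ih, Multiset.map_map]
      exact Multiset.cons_swap _ _ _
  | c :: x, [] => by
      have ih := shuffle_append_singleton a b x []
      simp only [List.nil_append] at ih
      simp [shuffle, ih, Multiset.map_map, add_comm]
      exact Multiset.cons_swap _ _ _
  | c :: x, d :: y => by
      have ih₁ := shuffle_append_singleton a b x (d :: y)
      have ih₂ := shuffle_append_singleton a b (c :: x) y
      simp only [List.cons_append] at ih₁ ih₂ ⊢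
      simp [shuffle, ih₁, ih₂, Multiset.map_map, add_left_comm, add_assoc]
termination_by x y => x.length + y.length

lemma shuffle_reverse (u v : List A) :
    shuffle u.reverse v.reverse = (shuffle u v).map List.reverse := by
  induction u, v using shuffle.induct with
  | case1 w => simp
  | case2 w => simp
  | case3 a u b v ih₁ ih₂ =>
    rw [List.reverse_cons, List.reverse_cons, shuffle_append_singleton, ← List.reverse_cons,
      ← List.reverse_cons, ih₁, ih₂, shuffle.eq_3]
    simp [Multiset.map_map]

end Shuffle

theorem eq_of_hasDerivAt_eq {E : Type*} [NormedAddCommGroup E] [NormedSpace ℝ E]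
    {f g f' : ℝ → E} (hf : ∀ t, HasDerivAt f (f' t) t) (hg : ∀ t, HasDerivAt g (f' t) t)
    (t₀ : ℝ) (h₀ : f t₀ = g t₀) : f = g :=
  eq_of_fderiv_eq (fun t => (hf t).differentiableAt) (fun t => (hg t).differentiableAt)
    (fun t => by rw [(hf t).hasFDerivAt.fderiv, (hg t).hasFDerivAt.fderiv]) t₀ h₀

section IteratedIntegral

variable {A : Type*} (lam : A → ℝ → ℂ)

@[simp]
lemma iterInt_nil_apply (t : ℝ) : iterInt lam [] t = 1 := rfl

@[simp]
lemma iterInt_cons_zero (ℓ : A) (w : List A) : iterInt lam (ℓ :: w) 0 = 0 := by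
  simp [iterInt]

variable {lam}

lemma continuous_iterInt (hlam : ∀ ℓ, Continuous (lam ℓ)) :
    ∀ w : List A, Continuous (iterInt lam w)
  | [] => continuous_const
  | ℓ :: w => by
    have h := (hlam ℓ).mul (continuous_iterInt hlam w)
    exact intervalIntegral.continuous_primitive (fun a b => h.intervalIntegrable a b) 0

lemma hasDerivAt_iterInt_cons (hlam : ∀ ℓ, Continuous (lam ℓ)) (ℓ : A) (w : List A) (t : ℝ) :
    HasDerivAt (iterInt lam (ℓ :: w)) (lam ℓ t * iterInt lam w t) t := by
  have h := (hlam ℓ).mul (continuous_iterInt hlam w)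
  exact intervalIntegral.integral_hasDerivAt_right (h.intervalIntegrable 0 t)
    h.stronglyMeasurable.stronglyMeasurableAtFilter h.continuousAt

lemma hasDerivAt_sum_map_iterInt_cons (hlam : ∀ ℓ, Continuous (lam ℓ)) (ℓ : A)
    (M : Multiset (List A)) (t : ℝ) :
    HasDerivAt (fun s => (M.map fun w => iterInt lam (ℓ :: w) s).sum)
      (lam ℓ t * (M.map fun w => iterInt lam w t).sum) t := by
  induction M using Multiset.induction_on with
  | empty => simpa using hasDerivAt_const t (0 : ℂ)
  | cons w M ih =>
    simp only [Multiset.map_cons, Multiset.sum_cons, mul_add]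
    exact (hasDerivAt_iterInt_cons hlam ℓ w t).fun_add ih

theorem iterInt_mul_iterInt (hlam : ∀ ℓ, Continuous (lam ℓ)) (u v : List A) (t : ℝ) :
    iterInt lam u t * iterInt lam v t = ((shuffle u v).map fun w => iterInt lam w t).sum := by
  induction u, v using shuffle.induct generalizing t with
  | case1 w => simp
  | case2 w => simp
  | case3 a u b v ih₁ ih₂ =>
    simp only [shuffle.eq_3, Multiset.map_add, Multiset.map_map, Function.comp_def,
      Multiset.sum_add]
    have hprod : (fun s => iterInt lam (a :: u) s * iterInt lam (b :: v) s) = fun s =>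
        ((shuffle u (b :: v)).map fun w => iterInt lam (a :: w) s).sum +
          ((shuffle (a :: u) v).map fun w => iterInt lam (b :: w) s).sum := by
      refine eq_of_hasDerivAt_eq (fun s =>
        (hasDerivAt_iterInt_cons hlam a u s).mul (hasDerivAt_iterInt_cons hlam b v s))
        (fun s => ?_) 0 (by simp)
      convert (hasDerivAt_sum_map_iterInt_cons hlam a _ s).fun_add
        (hasDerivAt_sum_map_iterInt_cons hlam b _ s) using 1
      rw [← ih₁, ← ih₂]
      ring
    exact congrFun hprod t

end IteratedIntegral

theorem stmt5_general {A : Type*} (lam : A → ℝ → ℂ)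
    (hcont : ∀ ℓ : A, Continuous (lam ℓ)) :
    ∀ t : ℝ, isGrp (fun w : List A => iterInt lam w.reverse t) := by
  intro t
  refine ⟨iterInt_nil_apply lam t, fun w w' => ?_⟩
  rw [iterInt_mul_iterInt hcont, shuffle_reverse, Multiset.map_map, Function.comp_def]

/-- The iterated-integral coefficients
`α(t)_{ℓ₁⋯ℓ_n} = ∫₀^t dt_n λ_{ℓ_n}(t_n) ∫₀^{t_n} dt_{n−1} λ_{ℓ_{n−1}}(t_{n−1}) ⋯ ∫₀^{t₂} dt₁ λ_{ℓ₁}(t₁)`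
(`α(t)_∅ = 1`) satisfy the shuffle relations, i.e. `α(t) ∈ G` for every `t`. -/
theorem stmt5 {A : Type*} [Countable A] (lam : A → ℝ → ℂ)
    (hcont : ∀ ℓ : A, Continuous (lam ℓ)) :
    ∀ t : ℝ, isGrp (fun w : List A => iterInt lam w.reverse t) :=
  stmt5_general lam hcont
end

section
/- Let β : ℝ → ℂ^W be such that β(t) ∈ 𝔤 for every t and each coefficient function t ↦ β(t)_w is continuous. Then there is a unique α : ℝ → ℂ^W with every coefficient function t ↦ α(t)_w continuously differentiable, α(0) = 1, and (d/dt) α(t)_w = (α(t)★β(t))_w for all words w and all t; moreover α(t) ∈ G for every t ∈ ℝ. -/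
open scoped BigOperators

/-!
The equation is triangular: since `β(t)_∅ = 0`, the derivative of `α_w` only involves `α` on
proper prefixes of `w`. By recursion on the length of `w`, the solution is therefore given by
iterated integrals, and two solutions with the same initial value agree.

For `α(t) ∈ G`, the point is that right convolution by a Lie element is a derivation of the
shuffle algebra: `Σ_{u ∈ w ⧢ w'} (α★β)_u = (α★β)_w α_{w'} + α_w (α★β)_{w'}` as soon as `α`
satisfies the shuffle relations on pairs of smaller total length. Hence, by induction on
`|w| + |w'|`, the function `α_w α_{w'} - Σ_{u ∈ w ⧢ w'} α_u` has zero derivative, and it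
vanishes at `t = 0` because the unit is a character of the shuffle algebra.
-/

open Finset

theorem eq_of_forall_hasDerivAt_zero {𝕜 F : Type*} [RCLike 𝕜] [NormedAddCommGroup F]
    [NormedSpace 𝕜 F] {f : 𝕜 → F} (hf : ∀ t, HasDerivAt f 0 t) (t t' : 𝕜) : f t = f t' :=
  is_const_of_deriv_eq_zero (fun s => (hf s).differentiableAt) (fun s => (hf s).deriv) t t'

theorem hasDerivAt_multiset_sum_map {ι 𝕜 F : Type*} [NontriviallyNormedField 𝕜]
    [NormedAddCommGroup F] [NormedSpace 𝕜 F] (M : Multiset ι) {f : 𝕜 → ι → F} {f' : ι → F}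
    {t : 𝕜} (hf : ∀ i, HasDerivAt (fun s => f s i) (f' i) t) :
    HasDerivAt (fun s => (M.map (f s)).sum) (M.map f').sum t := by
  induction M using Multiset.induction_on with
  | empty => simpa using hasDerivAt_const t (0 : F)
  | cons i M ih => simpa only [Multiset.map_cons, Multiset.sum_cons] using (hf i).fun_add ih

section Words

variable {A : Type*}

noncomputable def shuffleSum (f : List A → ℂ) (w w' : List A) : ℂ :=
  ((shuffle w w').map f).sum

@[simp]
theorem shuffleSum_nil_left (f : List A → ℂ) (w : List A) : shuffleSum f [] w = f w := by
  cases w <;> simp [shuffleSum, shuffle]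

@[simp]
theorem shuffleSum_nil_right (f : List A → ℂ) (w : List A) : shuffleSum f w [] = f w := by
  cases w <;> simp [shuffleSum, shuffle]

theorem shuffleSum_cons_cons (f : List A → ℂ) (a b : A) (u v : List A) :
    shuffleSum f (a :: u) (b :: v) =
      shuffleSum (fun s => f (a :: s)) u (b :: v) + shuffleSum (fun s => f (b :: s)) (a :: u) v := by
  simp [shuffleSum, shuffle, Multiset.map_map]

theorem shuffleSum_add (f g : List A → ℂ) (w w' : List A) :
    shuffleSum (fun s => f s + g s) w w' = shuffleSum f w w' + shuffleSum g w w' := by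
  simp [shuffleSum, Multiset.sum_map_add]

theorem shuffleSum_const_mul (c : ℂ) (f : List A → ℂ) (w w' : List A) :
    shuffleSum (fun s => c * f s) w w' = c * shuffleSum f w w' := by
  simp [shuffleSum, Multiset.sum_map_mul_left]

theorem shuffleSum_unitCW (w w' : List A) :
    shuffleSum unitCW w w' = unitCW w * unitCW w' := by
  rcases w with _ | ⟨a, u⟩
  · simp [unitCW]
  rcases w' with _ | ⟨b, v⟩
  · simp [unitCW]
  rw [shuffleSum_cons_cons]
  simp [shuffleSum, unitCW]

theorem conv_cons (x y : List A → ℂ) (a : A) (w : List A) :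
    conv x y (a :: w) = x [] * y (a :: w) + conv (fun u => x (a :: u)) y w := by
  rw [conv, List.length_cons, sum_range_succ']
  simp [conv, add_comm]

theorem conv_eq_sum_range {x y : List A → ℂ} (hy : y [] = 0) (w : List A) :
    conv x y w = ∑ i ∈ range w.length, x (w.take i) * y (w.drop i) := by
  simp [conv, sum_range_succ, hy]

/-- Shuffle and deconcatenation are compatible: the shuffle algebra is a bialgebra. -/
theorem shuffleSum_conv (x y : List A → ℂ) (w w' : List A) :
    shuffleSum (conv x y) w w' =
      ∑ i ∈ range (w.length + 1), ∑ j ∈ range (w'.length + 1),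
        shuffleSum x (w.take i) (w'.take j) * shuffleSum y (w.drop i) (w'.drop j) := by
  induction w generalizing w' x with
  | nil => simp [conv]
  | cons a u ih =>
    induction w' generalizing x with
    | nil => simp [conv]
    | cons b v ih' =>
      simp only [shuffleSum_cons_cons, conv_cons, shuffleSum_add, shuffleSum_const_mul, ih, ih']
      simp only [List.length_cons, sum_range_succ', shuffleSum_cons_cons, shuffleSum_nil_left,
        shuffleSum_nil_right, List.take_succ_cons, List.drop_succ_cons, List.take_zero,
        List.drop_zero, add_mul, mul_add, sum_add_distrib]
      ring

theorem shuffleSum_conv_of_isLie {x y : List A → ℂ} (hy : isLie y) (w w' : List A)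
    (hx : ∀ u v : List A, u.length + v.length < w.length + w'.length →
      x u * x v = shuffleSum x u v) :
    shuffleSum (conv x y) w w' = conv x y w * x w' + x w * conv x y w' := by
  have last_row : ∑ j ∈ range (w'.length + 1),
      shuffleSum x w (w'.take j) * shuffleSum y [] (w'.drop j) = x w * conv x y w' := by
    rw [sum_range_succ, conv_eq_sum_range hy.1, mul_sum]
    simp only [shuffleSum_nil_left, List.drop_length, hy.1, mul_zero, add_zero]
    refine sum_congr rfl fun j hj => ?_
    rw [← hx w (w'.take j) (by simp at hj ⊢; omega), mul_assoc]
  have other_rows : ∀ i ∈ range w.length, ∑ j ∈ range (w'.length + 1),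
      shuffleSum x (w.take i) (w'.take j) * shuffleSum y (w.drop i) (w'.drop j) =
        x (w.take i) * y (w.drop i) * x w' := by
    intro i hi
    rw [mem_range] at hi
    have hmixed : ∀ j ∈ range w'.length,
        shuffleSum x (w.take i) (w'.take j) * shuffleSum y (w.drop i) (w'.drop j) = 0 := by
      intro j hj
      rw [mem_range] at hj
      have hlie : shuffleSum y (w.drop i) (w'.drop j) = 0 :=
        hy.2 _ _ (by rw [Ne, List.drop_eq_nil_iff]; omega) (by rw [Ne, List.drop_eq_nil_iff]; omega)
      rw [hlie, mul_zero]
    rw [sum_range_succ, sum_eq_zero hmixed, zero_add, List.take_length, List.drop_length,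
      shuffleSum_nil_right, ← hx _ _ (by simp; omega)]
    ring
  rw [shuffleSum_conv, sum_range_succ, List.take_length, List.drop_length, last_row,
    sum_congr rfl other_rows, ← sum_mul, ← conv_eq_sum_range hy.1, add_comm]

def SolvesConvODE (β α : ℝ → List A → ℂ) : Prop :=
  ∀ (t : ℝ) (w : List A), HasDerivAt (fun s => α s w) (conv (α t) (β t) w) t

/-- The solution of `α' = α★β`, `α(0) = 1`, in integral form. The term `i = |w|` of `α★β` is left
out (it vanishes when `β(t)_∅ = 0`), which makes the recursion well founded. -/
noncomputable def orderedExp (β : ℝ → List A → ℂ) (t : ℝ) (w : List A) : ℂ :=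
  unitCW w + ∫ s in (0 : ℝ)..t, ∑ i : Fin w.length, orderedExp β s (w.take i) * β s (w.drop i)
termination_by w.length
decreasing_by simp

theorem orderedExp_zero (β : ℝ → List A → ℂ) : orderedExp β 0 = unitCW := by
  funext w
  rw [orderedExp, intervalIntegral.integral_same, add_zero]

theorem hasDerivAt_orderedExp {β : ℝ → List A → ℂ} (hβ0 : ∀ t, β t [] = 0)
    (hβc : ∀ w, Continuous fun t => β t w) (w : List A) (t : ℝ) :
    HasDerivAt (fun s => orderedExp β s w) (conv (orderedExp β t) (β t) w) t := by
  have hcont : Continuous fun s =>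
      ∑ i : Fin w.length, orderedExp β s (w.take i) * β s (w.drop i) :=
    continuous_finsetSum _ fun i _ => (continuous_iff_continuousAt.2
      fun s => (hasDerivAt_orderedExp hβ0 hβc (w.take i) s).continuousAt).mul (hβc _)
  have hint : (fun s => orderedExp β s w) = fun s => unitCW w +
      ∫ r in (0 : ℝ)..s, ∑ i : Fin w.length, orderedExp β r (w.take i) * β r (w.drop i) :=
    funext fun s => by rw [orderedExp]
  rw [hint, conv_eq_sum_range (hβ0 t), ← Fin.sum_univ_eq_sum_range
    (fun i => orderedExp β t (w.take i) * β t (w.drop i))]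
  exact (hcont.integral_hasStrictDerivAt 0 t).hasDerivAt.const_add (unitCW w)
termination_by w.length
decreasing_by simp

theorem contDiff_orderedExp {β : ℝ → List A → ℂ} (hβ0 : ∀ t, β t [] = 0)
    (hβc : ∀ w, Continuous fun t => β t w) (w : List A) :
    ContDiff ℝ 1 fun t => orderedExp β t w := by
  have hderiv := hasDerivAt_orderedExp hβ0 hβc
  rw [contDiff_one_iff_deriv, funext fun t => (hderiv w t).deriv]
  refine ⟨fun t => (hderiv w t).differentiableAt, ?_⟩
  simp only [conv_eq_sum_range (hβ0 _)]
  exact continuous_finsetSum _ fun i _ => (continuous_iff_continuousAt.2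
    fun t => (hderiv _ t).continuousAt).mul (hβc _)

namespace SolvesConvODE

variable {β α α' : ℝ → List A → ℂ}

theorem apply_eq_of_apply_zero_eq (hβ0 : ∀ t, β t [] = 0) (hα : SolvesConvODE β α)
    (hα' : SolvesConvODE β α') (h0 : α 0 = α' 0) (w : List A) (t : ℝ) : α t w = α' t w := by
  have hderiv : ∀ s, HasDerivAt (fun s => α s w - α' s w) 0 s := by
    intro s
    have hconv : conv (α s) (β s) w = conv (α' s) (β s) w := by
      simp only [conv_eq_sum_range (hβ0 s)]
      refine sum_congr rfl fun i hi => ?_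
      rw [apply_eq_of_apply_zero_eq hβ0 hα hα' h0 (w.take i) s]
    simpa [hconv] using (hα s w).fun_sub (hα' s w)
  have := eq_of_forall_hasDerivAt_zero hderiv t 0
  rwa [h0, sub_self, sub_eq_zero] at this
termination_by w.length
decreasing_by simp at hi ⊢; omega

theorem apply_nil (hβ0 : ∀ t, β t [] = 0) (hα : SolvesConvODE β α) (h0 : α 0 = unitCW)
    (t : ℝ) : α t [] = 1 := by
  have hderiv : ∀ s, HasDerivAt (fun s => α s []) 0 s := fun s => by
    simpa [conv_eq_sum_range (hβ0 s)] using hα s []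
  rw [eq_of_forall_hasDerivAt_zero hderiv t 0, h0, unitCW]

theorem mul_eq_shuffleSum (hβ : ∀ t, isLie (β t)) (hα : SolvesConvODE β α)
    (h0 : α 0 = unitCW) (w w' : List A) (t : ℝ) : α t w * α t w' = shuffleSum (α t) w w' := by
  have hderiv : ∀ s, HasDerivAt (fun s => α s w * α s w' - shuffleSum (α s) w w') 0 s := by
    intro s
    have hder := ((hα s w).fun_mul (hα s w')).fun_sub
      (hasDerivAt_multiset_sum_map (shuffle w w') fun u => hα s u)
    rwa [← shuffleSum, shuffleSum_conv_of_isLie (hβ s) w w'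
      fun u v huv => mul_eq_shuffleSum hβ hα h0 u v s, sub_self] at hder
  have := eq_of_forall_hasDerivAt_zero hderiv t 0
  rwa [h0, shuffleSum_unitCW, sub_self, sub_eq_zero] at this
termination_by w.length + w'.length

theorem isGrp (hβ : ∀ t, isLie (β t)) (hα : SolvesConvODE β α) (h0 : α 0 = unitCW)
    (t : ℝ) : isGrp (α t) :=
  ⟨hα.apply_nil (fun s => (hβ s).1) h0 t, fun w w' => hα.mul_eq_shuffleSum hβ h0 w w' t⟩

end SolvesConvODE

end Words

theorem stmt6_general {A : Type*} (β : ℝ → List A → ℂ)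
    (hβ : ∀ t : ℝ, isLie (β t)) (hβc : ∀ w : List A, Continuous (fun t => β t w)) :
    (∃! α : ℝ → List A → ℂ,
      (∀ w : List A, ContDiff ℝ 1 (fun t => α t w)) ∧
      α 0 = unitCW ∧
      (∀ (t : ℝ) (w : List A), HasDerivAt (fun s => α s w) (conv (α t) (β t) w) t)) ∧
    (∀ α : ℝ → List A → ℂ,
      (∀ w : List A, ContDiff ℝ 1 (fun t => α t w)) →
      α 0 = unitCW →
      (∀ (t : ℝ) (w : List A), HasDerivAt (fun s => α s w) (conv (α t) (β t) w) t) →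
      ∀ t : ℝ, isGrp (α t)) := by
  have hβ0 : ∀ t, β t [] = 0 := fun t => (hβ t).1
  have hsol : SolvesConvODE β (orderedExp β) := fun t w => hasDerivAt_orderedExp hβ0 hβc w t
  refine ⟨⟨orderedExp β, ⟨contDiff_orderedExp hβ0 hβc, orderedExp_zero β, hsol⟩, ?_⟩,
    fun α _ h0 hα => SolvesConvODE.isGrp hβ hα h0⟩
  rintro α ⟨-, h0, hα⟩
  funext t w
  exact SolvesConvODE.apply_eq_of_apply_zero_eq hβ0 hα hsol (by rw [h0, orderedExp_zero]) w t

/-- If `β(t) ∈ 𝔤` for all `t` with continuous coefficients, then the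
initial value problem `α(0) = 1`, `(d/dt)α(t) = α(t)★β(t)` has a unique solution with
`C¹` coefficients, and this solution satisfies `α(t) ∈ G` for all `t`. -/
theorem stmt6 {A : Type*} [Countable A] (β : ℝ → List A → ℂ)
    (hβ : ∀ t : ℝ, isLie (β t)) (hβc : ∀ w : List A, Continuous (fun t => β t w)) :
    (∃! α : ℝ → List A → ℂ,
      (∀ w : List A, ContDiff ℝ 1 (fun t => α t w)) ∧
      α 0 = unitCW ∧
      (∀ (t : ℝ) (w : List A), HasDerivAt (fun s => α s w) (conv (α t) (β t) w) t)) ∧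
    (∀ α : ℝ → List A → ℂ,
      (∀ w : List A, ContDiff ℝ 1 (fun t => α t w)) →
      α 0 = unitCW →
      (∀ (t : ℝ) (w : List A), HasDerivAt (fun s => α s w) (conv (α t) (β t) w) t) →
      ∀ t : ℝ, isGrp (α t)) :=
  stmt6_general β hβ hβc
end

section
/- (Dynkin–Specht–Wever identity for word basis functions.) Let A be a finite alphabet, let f_ℓ : ℂ^D → ℂ^D be smooth (in the real sense) maps for ℓ ∈ A, and let β ∈ 𝔤. Then for every n ≥ 1 and every x ∈ ℂ^D, Σ_{w ∈ A^n} β_w f_w(x) = (1/n) Σ_{ℓ₁⋯ℓ_n ∈ A^n} β_{ℓ₁⋯ℓ_n} [[⋯[[f_{ℓ₁},f_{ℓ₂}],f_{ℓ₃}]⋯],f_{ℓ_n}](x), where for n = 1 the right-hand side terms are β_{ℓ₁} f_{ℓ₁}(x). -/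
open scoped BigOperators

/-- Lie–Jacobi bracket `[g,f](x) = f′(x)g(x) − g′(x)f(x)` of vector fields on `ℂ^D`,
with derivatives taken in the real sense. -/
noncomputable def lieB {D : ℕ} (g f : (Fin D → ℂ) → (Fin D → ℂ)) :
    (Fin D → ℂ) → (Fin D → ℂ) :=
  fun x => fderiv ℝ f x (g x) - fderiv ℝ g x (f x)

/-- Word basis functions: `f_∅ = id` and `f_{ℓ₁⋯ℓ_n}(x) = f′_{ℓ₂⋯ℓ_n}(x) f_{ℓ₁}(x)`. -/
noncomputable def wordBasis {A : Type*} {D : ℕ}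
    (f : A → (Fin D → ℂ) → (Fin D → ℂ)) : List A → (Fin D → ℂ) → (Fin D → ℂ)
  | [], x => x
  | ℓ :: w, x => fderiv ℝ (wordBasis f w) x (f ℓ x)

/-- Iterated Lie–Jacobi bracket, bracketing from the left:
`iterLie [f₁,…,f_n] = [[⋯[[f₁,f₂],f₃]⋯],f_n]` (and `f₁` for a single field). -/
noncomputable def iterLie {D : ℕ} :
    List ((Fin D → ℂ) → (Fin D → ℂ)) → (Fin D → ℂ) → (Fin D → ℂ)
  | [] => fun _ => 0
  | h :: t => t.foldl (fun acc g => lieB acc g) h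

open scoped Classical

namespace DSW

variable {A : Type*}

lemma shuffle_nil_left (w : List A) : shuffle [] w = {w} := by
  rw [shuffle]

lemma shuffle_nil_right (w : List A) : shuffle w [] = {w} := by
  cases w
  · rw [shuffle]
  · rw [shuffle]; simp

lemma shuffle_cons_cons (a b : A) (u v : List A) :
    shuffle (a :: u) (b :: v)
      = ((shuffle u (b :: v)).map (a :: ·)) + ((shuffle (a :: u) v).map (b :: ·)) := by
  rw [shuffle]

private lemma shuffle_snoc_aux : ∀ n : ℕ, ∀ u v : List A, u.length + v.length ≤ n →
    ∀ a b : A,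
    shuffle (u ++ [a]) (v ++ [b])
      = ((shuffle u (v ++ [b])).map (· ++ [a])) + ((shuffle (u ++ [a]) v).map (· ++ [b])) := by
  intro n
  induction n with
  | zero =>
    intro u v h a b
    obtain rfl : u = [] := List.eq_nil_of_length_eq_zero (by omega)
    obtain rfl : v = [] := List.eq_nil_of_length_eq_zero (by omega)
    simp only [List.nil_append, shuffle_nil_left, shuffle_nil_right]
    rw [show ([a] : List A) = a :: [] from rfl, show ([b] : List A) = b :: [] from rfl,
      shuffle_cons_cons]
    simp [shuffle_nil_left, shuffle_nil_right, add_comm]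
  | succ n IH =>
    intro u v h a b
    match u, v with
    | [], [] =>
      simp only [List.nil_append, shuffle_nil_left, shuffle_nil_right]
      rw [show ([a] : List A) = a :: [] from rfl, show ([b] : List A) = b :: [] from rfl,
        shuffle_cons_cons]
      simp [shuffle_nil_left, shuffle_nil_right, add_comm]
    | [], y :: v' =>
      simp only [List.nil_append, List.cons_append]
      rw [shuffle_cons_cons a y [] (v' ++ [b])]
      have hIH := IH [] v' (by simp at h ⊢; omega) a b
      simp only [List.nil_append] at hIH
      rw [hIH, shuffle_cons_cons a y [] v']
      simp only [shuffle_nil_left, Multiset.map_add, Multiset.map_map, Function.comp_def,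
        Multiset.map_singleton, List.cons_append, List.append_assoc, List.nil_append,
        List.singleton_append]
      abel
    | x :: u', [] =>
      simp only [List.nil_append, List.cons_append]
      rw [shuffle_cons_cons x b (u' ++ [a]) []]
      have hIH := IH u' [] (by simp at h ⊢; omega) a b
      simp only [List.nil_append] at hIH
      rw [hIH, shuffle_cons_cons x b u' []]
      simp only [shuffle_nil_left, shuffle_nil_right, Multiset.map_add, Multiset.map_map,
        Function.comp_def, Multiset.map_singleton, List.cons_append, List.append_assoc,
        List.nil_append, List.singleton_append]
      abel
    | x :: u', y :: v' =>
      simp only [List.cons_append]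
      rw [shuffle_cons_cons x y (u' ++ [a]) (v' ++ [b]),
        shuffle_cons_cons x y u' (v' ++ [b]),
        shuffle_cons_cons x y (u' ++ [a]) v']
      have h1 := IH u' (y :: v') (by simp at h ⊢; omega) a b
      have h2 := IH (x :: u') v' (by simp at h ⊢; omega) a b
      simp only [List.cons_append] at h1 h2
      rw [h1, h2]
      simp only [Multiset.map_add, Multiset.map_map, Function.comp_def, List.cons_append,
        List.append_assoc]
      abel

lemma shuffle_snoc (a b : A) (u v : List A) :
    shuffle (u ++ [a]) (v ++ [b])
      = ((shuffle u (v ++ [b])).map (· ++ [a])) + ((shuffle (u ++ [a]) v).map (· ++ [b])) :=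
  shuffle_snoc_aux (u.length + v.length) u v le_rfl a b

/-- Coefficients of the left-normed bracket, with the bracket word given reversed. -/
noncomputable def crev : List A → List A → ℝ
  | [], _ => 0
  | [a], v => if v = [a] then 1 else 0
  | a :: b :: w, v =>
      (if v.getLast? = some a then crev (b :: w) v.dropLast else 0)
        - (if v.head? = some a then crev (b :: w) v.tail else 0)

/-- `c w v` = coefficient of the word `v` in the expansion of the left-normed
bracket `[[⋯[w₁,w₂],⋯],w_k]` in the tensor algebra. -/
noncomputable def c (w v : List A) : ℝ := crev w.reverse v

lemma c_single (a : A) (v : List A) : c [a] v = if v = [a] then 1 else 0 := rfl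

lemma c_snoc (w : List A) (hw : w ≠ []) (ℓ : A) (v : List A) :
    c (w ++ [ℓ]) v = (if v.getLast? = some ℓ then c w v.dropLast else 0)
      - (if v.head? = some ℓ then c w v.tail else 0) := by
  obtain ⟨b, w', hb⟩ : ∃ b w', w.reverse = b :: w' := by
    cases h : w.reverse with
    | nil => exact absurd (by simpa using congrArg List.reverse h) hw
    | cons b w' => exact ⟨b, w', rfl⟩
  unfold c
  rw [List.reverse_append, List.reverse_singleton, List.singleton_append, hb]
  rfl

lemma sum_fin_snoc [Fintype A] {M : Type*} [AddCommMonoid M] (n : ℕ)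
    (F : (Fin (n + 1) → A) → M) :
    ∑ v : Fin (n + 1) → A, F v = ∑ u : Fin n → A, ∑ a : A, F (Fin.snoc u a) := by
  rw [← (Fin.snocEquiv (fun _ => A)).sum_comp F, Fintype.sum_prod_type]
  rw [Finset.sum_comm]
  rfl

lemma sum_fin_cons [Fintype A] {M : Type*} [AddCommMonoid M] (n : ℕ)
    (F : (Fin (n + 1) → A) → M) :
    ∑ v : Fin (n + 1) → A, F v = ∑ u : Fin n → A, ∑ a : A, F (Fin.cons a u) := by
  rw [← (Fin.consEquiv (fun _ => A)).sum_comp F, Fintype.sum_prod_type]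
  rw [Finset.sum_comm]
  rfl

lemma ofFn_snoc {n : ℕ} (u : Fin n → A) (a : A) :
    List.ofFn (Fin.snoc u a : Fin (n + 1) → A) = List.ofFn u ++ [a] := by
  rw [List.ofFn_succ']
  simp [List.concat_eq_append]

lemma ofFn_cons {n : ℕ} (u : Fin n → A) (a : A) :
    List.ofFn (Fin.cons a u : Fin (n + 1) → A) = a :: List.ofFn u := by
  rw [List.ofFn_succ]
  simp

/-- Splitting a sum against the snoc-recursion of `c`. -/
lemma split_sum [Fintype A] {M : Type*} [AddCommGroup M] [Module ℝ M] {n : ℕ}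
    (w : List A) (hw : w ≠ []) (ℓ : A) (φ : List A → M) :
    ∑ v : Fin (n + 1) → A, c (w ++ [ℓ]) (List.ofFn v) • φ (List.ofFn v)
      = ∑ u : Fin n → A, c w (List.ofFn u) •
          (φ (List.ofFn u ++ [ℓ]) - φ (ℓ :: List.ofFn u)) := by
  have key : ∀ v : Fin (n+1) → A, c (w ++ [ℓ]) (List.ofFn v) • φ (List.ofFn v)
      = (if (List.ofFn v).getLast? = some ℓ then c w (List.ofFn v).dropLast •
          φ (List.ofFn v) else 0)
        - (if (List.ofFn v).head? = some ℓ then c w (List.ofFn v).tail •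
          φ (List.ofFn v) else 0) := by
    intro v
    rw [c_snoc w hw]
    rw [sub_smul]
    congr 1 <;> [skip; skip] <;> split <;> simp
  simp only [key, smul_sub]
  rw [Finset.sum_sub_distrib, Finset.sum_sub_distrib]
  congr 1
  · rw [sum_fin_snoc]
    have : ∀ (u : Fin n → A) (a : A),
        (if (List.ofFn (Fin.snoc u a : Fin (n+1) → A)).getLast? = some ℓ then
          c w (List.ofFn (Fin.snoc u a : Fin (n+1) → A)).dropLast •
            φ (List.ofFn (Fin.snoc u a : Fin (n+1) → A)) else 0)
        = (if a = ℓ then c w (List.ofFn u) • φ (List.ofFn u ++ [a]) else 0) := by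
      intro u a
      rw [ofFn_snoc]
      simp [List.getLast?_concat, List.dropLast_concat]
    simp only [this]
    refine Finset.sum_congr rfl fun u _ => ?_
    simp
  · rw [sum_fin_cons]
    have : ∀ (u : Fin n → A) (a : A),
        (if (List.ofFn (Fin.cons a u : Fin (n+1) → A)).head? = some ℓ then
          c w (List.ofFn (Fin.cons a u : Fin (n+1) → A)).tail •
            φ (List.ofFn (Fin.cons a u : Fin (n+1) → A)) else 0)
        = (if a = ℓ then c w (List.ofFn u) • φ (a :: List.ofFn u) else 0) := by
      intro u a
      rw [ofFn_cons]
      simp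
    simp only [this]
    refine Finset.sum_congr rfl fun u _ => ?_
    simp


section PartA

variable [Fintype A] (β : List A → ℂ)

/-- `Tt β t v j` : the `j`-th unsigned term in the expansion. -/
noncomputable def Tt (t v : List A) (j : ℕ) : ℂ :=
  match v.drop j with
  | [] => 0
  | a :: r => ((shuffle (v.take j).reverse r).map (fun s => β (a :: (s ++ t)))).sum

lemma Tt_def (t v : List A) (j : ℕ) (a : A) (r : List A) (h : v.drop j = a :: r) :
    Tt β t v j = ((shuffle (v.take j).reverse r).map (fun s => β (a :: (s ++ t)))).sum := by
  unfold Tt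
  rw [h]

/-- `GsumN n δ v = Σ_{w ∈ Aⁿ} c(w,v) δ(w)`. -/
noncomputable def GsumN (n : ℕ) (δ : List A → ℂ) (v : List A) : ℂ :=
  ∑ w : Fin n → A, c (List.ofFn w) v • δ (List.ofFn w)

lemma GsumN_single (δ : List A → ℂ) (a : A) : GsumN 1 δ [a] = δ [a] := by
  unfold GsumN
  rw [sum_fin_cons]
  have : ∀ (u : Fin 0 → A) (b : A),
      c (List.ofFn (Fin.cons b u : Fin 1 → A)) [a] • δ (List.ofFn (Fin.cons b u : Fin 1 → A))
        = if b = a then δ [a] else 0 := by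
    intro u b
    rw [ofFn_cons]
    simp only [List.ofFn_zero]
    rw [c_single]
    by_cases hb : b = a
    · subst hb; simp
    · rw [if_neg (by simpa using fun h : a = b => hb h.symm), if_neg hb, zero_smul]
  simp only [this]
  simp

lemma GsumN_rec (t : List A) (x z : A) (u' : List A) (m : ℕ) (hm : u'.length = m) :
    GsumN (m + 2) (fun w => β (w ++ t)) (x :: (u' ++ [z]))
      = GsumN (m + 1) (fun w => β (w ++ z :: t)) (x :: u')
        - GsumN (m + 1) (fun w => β (w ++ x :: t)) (u' ++ [z]) := by
  unfold GsumN
  rw [sum_fin_snoc]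
  have key : ∀ (u : Fin (m + 1) → A) (a : A),
      c (List.ofFn (Fin.snoc u a : Fin (m+2) → A)) (x :: (u' ++ [z])) •
        (fun w => β (w ++ t)) (List.ofFn (Fin.snoc u a : Fin (m+2) → A))
      = (if z = a then c (List.ofFn u) (x :: u') • β (List.ofFn u ++ z :: t) else 0)
        - (if x = a then c (List.ofFn u) (u' ++ [z]) • β (List.ofFn u ++ x :: t) else 0) := by
    intro u a
    rw [ofFn_snoc]
    have hne : List.ofFn u ≠ [] := by
      rw [List.ofFn_succ]; simp
    rw [c_snoc _ hne]
    have h1 : (x :: (u' ++ [z])).getLast? = some z := by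
      rw [← List.cons_append]
      exact List.getLast?_concat
    have h2 : (x :: (u' ++ [z])).dropLast = x :: u' := by
      rw [← List.cons_append]
      exact List.dropLast_concat
    have h3 : (x :: (u' ++ [z])).head? = some x := rfl
    have h4 : (x :: (u' ++ [z])).tail = u' ++ [z] := rfl
    rw [h1, h2, h3, h4, sub_smul]
    congr 1
    · by_cases hz : z = a
      · subst hz; simp [List.append_assoc]
      · rw [if_neg (show ¬ some z = some a by simpa using hz), if_neg hz, zero_smul]
    · by_cases hx : x = a
      · subst hx; simp [List.append_assoc]
      · rw [if_neg (show ¬ some x = some a by simpa using hx), if_neg hx, zero_smul]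
  simp only [key]
  simp only [Finset.sum_sub_distrib]
  congr 1
  · refine Finset.sum_congr rfl fun u _ => ?_
    simp
  · refine Finset.sum_congr rfl fun u _ => ?_
    simp


lemma Tt_split (t : List A) (x z : A) (u' : List A) :
    ∀ j, j ≤ u'.length + 1 →
    Tt β t (x :: (u' ++ [z])) j
      = (if j < u'.length + 1 then Tt β (z :: t) (x :: u') j else 0)
        + (if 0 < j then Tt β (x :: t) (u' ++ [z]) (j - 1) else 0) := by
  intro j hj
  match j with
  | 0 =>
    rw [if_pos (Nat.succ_pos _), if_neg (lt_irrefl 0)]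
    rw [Tt_def β t _ 0 x (u' ++ [z]) rfl, Tt_def β (z :: t) _ 0 x u' rfl]
    simp only [List.take_nil, List.take_zero, List.reverse_nil, shuffle_nil_left,
      Multiset.map_singleton, Multiset.sum_singleton, List.append_assoc,
      List.singleton_append, add_zero]
  | (i + 1) =>
    by_cases him : i < u'.length
    · -- middle case
      obtain ⟨a, r, har⟩ : ∃ a r, u'.drop i = a :: r := by
        cases h : u'.drop i with
        | nil => exact absurd (List.drop_eq_nil_iff.mp h) (by omega)
        | cons a r => exact ⟨a, r, rfl⟩
      have hdropv : (x :: (u' ++ [z])).drop (i + 1) = a :: (r ++ [z]) := by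
        rw [List.drop_succ_cons, List.drop_append_of_le_length (by omega), har]
        rfl
      have htakev : ((x :: (u' ++ [z])).take (i + 1)).reverse
          = (u'.take i).reverse ++ [x] := by
        rw [List.take_succ_cons, List.take_append_of_le_length (by omega),
          List.reverse_cons]
      have hdropu : (u' ++ [z]).drop i = a :: (r ++ [z]) := by
        rw [List.drop_append_of_le_length (by omega), har]; rfl
      have htakeu : ((u' ++ [z]).take i).reverse = (u'.take i).reverse := by
        rw [List.take_append_of_le_length (by omega)]
      have hdropv' : (x :: u').drop (i + 1) = a :: r := by
        rw [List.drop_succ_cons, har]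
      have htakev' : ((x :: u').take (i + 1)).reverse
          = (u'.take i).reverse ++ [x] := by
        rw [List.take_succ_cons, List.reverse_cons]
      rw [if_pos (show i + 1 < u'.length + 1 by omega), if_pos (Nat.succ_pos i)]
      rw [Tt_def β t _ (i+1) a (r ++ [z]) hdropv, htakev,
        Tt_def β (z :: t) _ (i+1) a r hdropv', htakev',
        Tt_def β (x :: t) _ ((i+1)-1) a (r ++ [z]) (by simpa using hdropu)]
      have : ((u' ++ [z]).take ((i+1)-1)).reverse = (u'.take i).reverse := by
        simpa using htakeu
      rw [this]
      rw [shuffle_snoc x z ((u'.take i).reverse) r]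
      rw [Multiset.map_add, Multiset.sum_add, Multiset.map_map, Multiset.map_map]
      rw [add_comm]
      congr 1
      · refine congrArg Multiset.sum (Multiset.map_congr rfl fun s _ => ?_)
        simp [List.append_assoc]
      · refine congrArg Multiset.sum (Multiset.map_congr rfl fun s _ => ?_)
        simp [List.append_assoc]
    · -- top case : i = u'.length
      have hieq : i = u'.length := by omega
      subst hieq
      rw [if_neg (by omega : ¬ (u'.length + 1 < u'.length + 1)),
        if_pos (Nat.succ_pos u'.length), zero_add]
      have hdropv : (x :: (u' ++ [z])).drop (u'.length + 1) = z :: [] := by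
        rw [List.drop_succ_cons, List.drop_append_of_le_length le_rfl]
        simp
      have htakev : ((x :: (u' ++ [z])).take (u'.length + 1)).reverse
          = u'.reverse ++ [x] := by
        rw [List.take_succ_cons, List.take_append_of_le_length le_rfl]
        simp
      have hdropu : (u' ++ [z]).drop ((u'.length + 1) - 1) = z :: [] := by
        simp
      have htakeu : ((u' ++ [z]).take ((u'.length + 1) - 1)).reverse = u'.reverse := by
        simp
      rw [Tt_def β t _ _ z [] hdropv, htakev, Tt_def β (x :: t) _ _ z [] hdropu, htakeu]
      rw [shuffle_nil_right, shuffle_nil_right]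
      simp [List.append_assoc]


lemma claimStar : ∀ (n : ℕ) (v : List A), v.length = n → v ≠ [] → ∀ t : List A,
    GsumN n (fun w => β (w ++ t)) v
      = ∑ j ∈ Finset.range n, (-1 : ℂ) ^ j * Tt β t v j := by
  intro n
  induction n using Nat.strong_induction_on with
  | _ n IH =>
    match n with
    | 0 => intro v hv hne t; exact absurd (List.eq_nil_of_length_eq_zero hv) hne
    | 1 =>
      intro v hv hne t
      obtain ⟨a, rfl⟩ := List.length_eq_one_iff.mp hv
      rw [GsumN_single, Finset.sum_range_one, Tt_def β t _ 0 a [] rfl]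
      simp [shuffle_nil_left]
    | (m + 2) =>
      intro v hv hne t
      obtain ⟨x, u, rfl⟩ : ∃ x u, v = x :: u := by
        cases v with
        | nil => simp at hv
        | cons x u => exact ⟨x, u, rfl⟩
      obtain ⟨u', z, rfl⟩ : ∃ u' z, u = u' ++ [z] := by
        rcases List.eq_nil_or_concat u with h | ⟨u', z, h⟩
        · subst h; simp at hv
        · exact ⟨u', z, by simpa [List.concat_eq_append] using h⟩
      have hm : u'.length = m := by simp at hv; omega
      subst hm
      rw [GsumN_rec β t x z u' u'.length rfl]
      rw [IH (u'.length + 1) (by omega) (x :: u') (by simp) (by simp) (z :: t),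
        IH (u'.length + 1) (by omega) (u' ++ [z]) (by simp) (by simp) (x :: t)]
      have hsplit : ∀ j ∈ Finset.range (u'.length + 2),
          (-1 : ℂ) ^ j * Tt β t (x :: (u' ++ [z])) j
            = (-1 : ℂ) ^ j * (if j < u'.length + 1 then Tt β (z :: t) (x :: u') j else 0)
              + (-1 : ℂ) ^ j * (if 0 < j then Tt β (x :: t) (u' ++ [z]) (j - 1) else 0) := by
        intro j hjm
        rw [← mul_add, ← Tt_split β t x z u' j
          (by have := Finset.mem_range.mp hjm; omega)]
      rw [eq_comm, Finset.sum_congr rfl hsplit, Finset.sum_add_distrib, sub_eq_add_neg]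
      congr 1
      · rw [Finset.sum_range_succ, if_neg (lt_irrefl (u'.length + 1)), mul_zero, add_zero]
        refine Finset.sum_congr rfl fun j hj => ?_
        rw [if_pos (Finset.mem_range.mp hj)]
      · rw [Finset.sum_range_succ']
        rw [if_neg (lt_irrefl 0), mul_zero, add_zero, ← Finset.sum_neg_distrib]
        refine Finset.sum_congr rfl fun j hj => ?_
        rw [if_pos (Nat.succ_pos j)]
        simp only [Nat.add_sub_cancel]
        rw [pow_succ]
        ring

lemma Tt_neg (hβ : isLie β) (v : List A) :
    ∀ j, j + 1 < v.length → Tt β [] v (j + 1) = - Tt β [] v j := by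
  intro j hj
  obtain ⟨a, r, har⟩ : ∃ a r, v.drop j = a :: r := by
    cases h : v.drop j with
    | nil => exact absurd (List.drop_eq_nil_iff.mp h) (by omega)
    | cons a r => exact ⟨a, r, rfl⟩
  have hr1 : v.drop (j + 1) = r := by
    have : v.drop (j + 1) = (v.drop j).drop 1 := by
      rw [List.drop_drop]
    rw [this, har, List.drop_one, List.tail_cons]
  obtain ⟨b, r', hbr⟩ : ∃ b r', r = b :: r' := by
    cases h : r with
    | nil => exfalso; rw [h] at hr1; have := List.drop_eq_nil_iff.mp hr1; omega
    | cons b r' => exact ⟨b, r', rfl⟩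
  have hgj : v[j]? = some a := by
    have h0 : (v.drop j)[0]? = v[j + 0]? := List.getElem?_drop
    rw [har] at h0
    simpa using h0.symm
  have htake : (v.take (j + 1)).reverse = a :: (v.take j).reverse := by
    rw [List.take_succ, hgj]
    simp
  have hTj1 : Tt β [] v (j + 1)
      = ((shuffle (a :: (v.take j).reverse) r').map (fun s => β (b :: s))).sum := by
    rw [Tt_def β [] v (j+1) b r' (by rw [hr1, hbr]), htake]
    refine congrArg Multiset.sum (Multiset.map_congr rfl fun s _ => ?_)
    rw [List.append_nil]
  have hTj : Tt β [] v j
      = ((shuffle ((v.take j).reverse) (b :: r')).map (fun s => β (a :: s))).sum := by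
    rw [Tt_def β [] v j a r har, hbr]
    refine congrArg Multiset.sum (Multiset.map_congr rfl fun s _ => ?_)
    rw [List.append_nil]
  have hshuf := hβ.2 (a :: (v.take j).reverse) (b :: r') (by simp) (by simp)
  rw [shuffle_cons_cons, Multiset.map_add, Multiset.sum_add, Multiset.map_map,
    Multiset.map_map] at hshuf
  rw [hTj1, hTj]
  have e1 : (Multiset.map (β ∘ (a :: ·)) (shuffle ((v.take j).reverse) (b :: r'))).sum
      = (Multiset.map (fun s => β (a :: s)) (shuffle ((v.take j).reverse) (b :: r'))).sum := rfl
  have e2 : (Multiset.map (β ∘ (b :: ·)) (shuffle (a :: (v.take j).reverse) r')).sum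
      = (Multiset.map (fun s => β (b :: s)) (shuffle (a :: (v.take j).reverse) r')).sum := rfl
  rw [e1, e2] at hshuf
  linear_combination hshuf

lemma Tt_pow (hβ : isLie β) (v : List A) (hne : v ≠ []) :
    ∀ j, j < v.length → Tt β [] v j = (-1 : ℂ) ^ j * β v := by
  intro j
  induction j with
  | zero =>
    intro _
    obtain ⟨a, r, rfl⟩ : ∃ a r, v = a :: r := by
      cases v with
      | nil => exact absurd rfl hne
      | cons a r => exact ⟨a, r, rfl⟩
    rw [Tt_def β [] _ 0 a r rfl]
    simp [shuffle_nil_left]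
  | succ j IHj =>
    intro hj
    rw [Tt_neg β hβ v j hj, IHj (by omega)]
    rw [pow_succ]
    ring

lemma partA (hβ : isLie β) (n : ℕ) (v : List A) (hv : v.length = n) (hne : v ≠ []) :
    ∑ w : Fin n → A, (c (List.ofFn w) v) • β (List.ofFn w) = (n : ℂ) * β v := by
  have h1 := claimStar β n v hv hne []
  simp only [List.append_nil] at h1
  have h2 : ∀ j ∈ Finset.range n, (-1 : ℂ) ^ j * Tt β [] v j = β v := by
    intro j hj
    rw [Tt_pow β hβ v hne j (by rw [hv]; exact Finset.mem_range.mp hj), ← mul_assoc,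
      ← mul_pow]
    simp
  rw [Finset.sum_congr rfl h2, Finset.sum_const, Finset.card_range] at h1
  rw [show (∑ w : Fin n → A, (c (List.ofFn w) v) • β (List.ofFn w)) = GsumN n β v from rfl,
    h1, nsmul_eq_mul]

end PartA

section PartB

variable {D : ℕ} (f : A → (Fin D → ℂ) → (Fin D → ℂ))

/-- Iterated directional-derivative operator along single-letter vector fields. -/
noncomputable def opD : List A → ((Fin D → ℂ) → (Fin D → ℂ)) → ((Fin D → ℂ) → (Fin D → ℂ))
  | [], h => h
  | a :: u, h => fun x => fderiv ℝ (opD u h) x (f a x)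

lemma wordBasis_nil : wordBasis f [] = id := rfl

variable (hf : ∀ ℓ : A, ContDiff ℝ (⊤ : ℕ∞) (f ℓ))
include hf

lemma contDiff_opD {h : (Fin D → ℂ) → (Fin D → ℂ)} (hh : ContDiff ℝ (⊤ : ℕ∞) h) :
    ∀ u : List A, ContDiff ℝ (⊤ : ℕ∞) (opD f u h) := by
  intro u
  induction u with
  | nil => exact hh
  | cons a u IH =>
    exact (IH.fderiv_right (by simp)).clm_apply (hf a)

lemma contDiff_wordBasis : ∀ u : List A, ContDiff ℝ (⊤ : ℕ∞) (wordBasis f u) := by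
  intro u
  induction u with
  | nil => exact contDiff_id
  | cons a u IH =>
    exact (IH.fderiv_right (by simp)).clm_apply (hf a)

omit hf

lemma wordBasis_single (a : A) : wordBasis f [a] = f a := by
  funext x
  show fderiv ℝ (wordBasis f []) x (f a x) = f a x
  rw [wordBasis_nil, fderiv_id]
  rfl

lemma opD_wordBasis : ∀ (u v : List A), opD f u (wordBasis f v) = wordBasis f (u ++ v) := by
  intro u v
  induction u with
  | nil => rfl
  | cons a u IH =>
    funext x
    show fderiv ℝ (opD f u (wordBasis f v)) x (f a x) = _
    rw [IH]
    rfl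

lemma opD_append (u u' : List A) (h : (Fin D → ℂ) → (Fin D → ℂ)) :
    opD f (u ++ u') h = opD f u (opD f u' h) := by
  induction u with
  | nil => rfl
  | cons a u IH =>
    funext x
    show fderiv ℝ (opD f (u ++ u') h) x (f a x) = _
    rw [IH]
    rfl

end PartB

section Main

variable [Fintype A] {D : ℕ} (f : A → (Fin D → ℂ) → (Fin D → ℂ))
variable (hf : ∀ ℓ : A, ContDiff ℝ (⊤ : ℕ∞) (f ℓ))

lemma sum_fin_one_pick {M : Type*} [AddCommGroup M] [Module ℝ M] (ℓ : A) (φ : List A → M) :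
    ∑ u : Fin 1 → A, c [ℓ] (List.ofFn u) • φ (List.ofFn u) = φ [ℓ] := by
  rw [sum_fin_cons 0]
  have key : ∀ (u : Fin 0 → A) (b : A),
      c [ℓ] (List.ofFn (Fin.cons b u : Fin 1 → A)) • φ (List.ofFn (Fin.cons b u : Fin 1 → A))
        = if b = ℓ then φ [ℓ] else 0 := by
    intro u b
    rw [ofFn_cons]
    simp only [List.ofFn_zero]
    rw [c_single]
    by_cases hb : b = ℓ
    · subst hb; simp
    · rw [if_neg (by simpa using hb), if_neg hb, zero_smul]
  simp only [key]
  simp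

include hf

lemma main_ind :
    ∀ (w : List A), w ≠ [] → ∀ (n : ℕ), w.length = n →
    (∀ x, iterLie (w.map f) x
        = ∑ u : Fin n → A, c w (List.ofFn u) • wordBasis f (List.ofFn u) x)
    ∧ (∀ (h : (Fin D → ℂ) → (Fin D → ℂ)), ContDiff ℝ (⊤ : ℕ∞) h → ∀ x,
        (∑ u : Fin n → A, c w (List.ofFn u) • fderiv ℝ h x (wordBasis f (List.ofFn u) x))
        = ∑ u : Fin n → A, c w (List.ofFn u) • opD f (List.ofFn u) h x) := by
  intro w
  induction w using List.reverseRecOn with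
  | nil => intro hne; exact absurd rfl hne
  | append_singleton w ℓ IH =>
    intro _ n hn
    rcases eq_or_ne w [] with rfl | hw
    · -- base case : single letter
      obtain rfl : n = 1 := by simpa using hn.symm
      simp only [List.nil_append] at *
      constructor
      · intro x
        rw [sum_fin_one_pick ℓ (fun v => wordBasis f v x), wordBasis_single]
        rfl
      · intro h hh x
        rw [sum_fin_one_pick ℓ (fun v => fderiv ℝ h x (wordBasis f v x)),
          sum_fin_one_pick ℓ (fun v => opD f v h x), wordBasis_single]
        rfl
    · -- inductive step
      obtain rfl : n = w.length + 1 := by simpa using hn.symm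
      obtain ⟨IH1, IH2⟩ := IH hw w.length rfl
      -- differentiability facts
      have dWB : ∀ v : List A, Differentiable ℝ (wordBasis f v) :=
        fun v => (contDiff_wordBasis f hf v).differentiable (by simp)
      have dOP : ∀ (v : List A) (h : (Fin D → ℂ) → (Fin D → ℂ)), ContDiff ℝ (⊤ : ℕ∞) h →
          Differentiable ℝ (opD f v h) :=
        fun v h hh => (contDiff_opD f hf hh v).differentiable (by simp)
      set m := w.length with hm
      -- the sum function
      set F : (Fin D → ℂ) → (Fin D → ℂ) :=
        fun y => ∑ u : Fin m → A, c w (List.ofFn u) • wordBasis f (List.ofFn u) y with hF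
      have hGF : iterLie (w.map f) = F := funext IH1
      have fderiv_sum_smul : ∀ (g : (Fin m → A) → (Fin D → ℂ) → (Fin D → ℂ)),
          (∀ u, Differentiable ℝ (g u)) → ∀ x : Fin D → ℂ,
          fderiv ℝ (fun y => ∑ u : Fin m → A, c w (List.ofFn u) • g u y) x
            = ∑ u : Fin m → A, c w (List.ofFn u) • fderiv ℝ (g u) x := by
        intro g hg x
        refine (fderiv_fun_sum (fun u _ => ((hg u) x).const_smul (c w (List.ofFn u)))).trans ?_
        exact Finset.sum_congr rfl fun u _ => fderiv_const_smul ((hg u) x) _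
      have e_iter : iterLie ((w ++ [ℓ]).map f) = lieB (iterLie (w.map f)) (f ℓ) := by
        rw [List.map_append]
        cases hmap : w.map f with
        | nil => exact absurd (List.map_eq_nil_iff.mp hmap) hw
        | cons g t =>
          show iterLie (g :: t ++ [f ℓ]) = _
          simp only [List.cons_append, iterLie, List.foldl_append, List.foldl_cons,
            List.foldl_nil]
      have key1 : ∀ x, fderiv ℝ (f ℓ) x (iterLie (w.map f) x)
          = ∑ u : Fin m → A, c w (List.ofFn u) • wordBasis f (List.ofFn u ++ [ℓ]) x := by
        intro x
        rw [IH1 x, map_sum]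
        simp only [map_smul]
        rw [IH2 (f ℓ) (hf ℓ) x]
        refine Finset.sum_congr rfl fun u _ => ?_
        congr 1
        calc opD f (List.ofFn u) (f ℓ) x
            = opD f (List.ofFn u) (wordBasis f [ℓ]) x := by rw [wordBasis_single]
          _ = wordBasis f (List.ofFn u ++ [ℓ]) x := by rw [opD_wordBasis]
      have key2 : ∀ x, fderiv ℝ (iterLie (w.map f)) x (f ℓ x)
          = ∑ u : Fin m → A, c w (List.ofFn u) • wordBasis f (ℓ :: List.ofFn u) x := by
        intro x
        rw [hGF, hF, fderiv_sum_smul _ (fun u => dWB _)]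
        simp only [ContinuousLinearMap.coe_sum', Finset.sum_apply,
          ContinuousLinearMap.coe_smul', Pi.smul_apply]
        rfl
      constructor
      · intro x
        rw [e_iter]
        show fderiv ℝ (f ℓ) x (iterLie (w.map f) x)
            - fderiv ℝ (iterLie (w.map f)) x (f ℓ x) = _
        rw [key1 x, key2 x, ← Finset.sum_sub_distrib]
        simp only [← smul_sub]
        exact (split_sum w hw ℓ (fun v => wordBasis f v x)).symm
      · intro h hh x
        rw [split_sum w hw ℓ (fun v => fderiv ℝ h x (wordBasis f v x)),
          split_sum w hw ℓ (fun v => opD f v h x)]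
        simp only [smul_sub]
        rw [Finset.sum_sub_distrib, Finset.sum_sub_distrib]
        -- second derivative at x
        set H := fderiv ℝ (fderiv ℝ h) x with hH
        have dh : Differentiable ℝ h := hh.differentiable (by simp)
        have dh' : Differentiable ℝ (fderiv ℝ h) :=
          (hh.fderiv_right (WithTop.coe_le_coe.mpr le_top : (1 : WithTop ℕ∞) + 1 ≤ ((⊤ : ℕ∞) : WithTop ℕ∞))).differentiable one_ne_zero
        have hsymm : ∀ v w', H v w' = H w' v :=
          second_derivative_symmetric (fun y => (dh y).hasFDerivAt)
            ((dh' x).hasFDerivAt)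
        set h' : (Fin D → ℂ) → (Fin D → ℂ) := fun y => fderiv ℝ h y (f ℓ y) with hh'def
        have hh' : ContDiff ℝ (⊤ : ℕ∞) h' := (hh.fderiv_right (by simp)).clm_apply (hf ℓ)
        -- R1 = fderiv h' x (F x)
        have hR1 : ∑ u : Fin m → A, c w (List.ofFn u) • opD f (List.ofFn u ++ [ℓ]) h x
            = fderiv ℝ h' x (F x) := by
          have e0 : ∀ u : Fin m → A, opD f (List.ofFn u ++ [ℓ]) h = opD f (List.ofFn u) h' := by
            intro u
            rw [opD_append]
            rfl
          simp only [e0]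
          rw [← IH2 h' hh' x, hF, map_sum]
          simp only [map_smul]
        -- fderiv h' x expansion
        have hfd_h' : fderiv ℝ h' x
            = (fderiv ℝ h x).comp (fderiv ℝ (f ℓ) x) + H.flip (f ℓ x) := by
          rw [hh'def, hH]
          exact fderiv_clm_apply (dh' x) ((hf ℓ).differentiable (by simp) x)
        -- E1 pieces
        have hE1 : fderiv ℝ h' x (F x)
            = (∑ u : Fin m → A, c w (List.ofFn u) • fderiv ℝ h x (wordBasis f (List.ofFn u ++ [ℓ]) x))
              + ∑ u : Fin m → A, c w (List.ofFn u) • H (f ℓ x) (wordBasis f (List.ofFn u) x) := by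
          rw [hfd_h']
          simp only [ContinuousLinearMap.add_apply, ContinuousLinearMap.coe_comp',
            Function.comp_apply, ContinuousLinearMap.flip_apply]
          congr 1
          · have : fderiv ℝ (f ℓ) x (F x)
                = ∑ u : Fin m → A, c w (List.ofFn u) • wordBasis f (List.ofFn u ++ [ℓ]) x := by
              rw [← hGF]
              exact key1 x
            rw [this, map_sum]
            simp only [map_smul]
          · rw [hF, map_sum]
            simp only [map_smul]
            simp only [ContinuousLinearMap.coe_sum', Finset.sum_apply,
              ContinuousLinearMap.coe_smul', Pi.smul_apply]
            refine Finset.sum_congr rfl fun u _ => ?_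
            congr 1
            exact hsymm _ _
        -- R2 expansion
        have hR2 : ∑ u : Fin m → A, c w (List.ofFn u) • opD f (ℓ :: List.ofFn u) h x
            = (∑ u : Fin m → A, c w (List.ofFn u) • fderiv ℝ h x (wordBasis f (ℓ :: List.ofFn u) x))
              + ∑ u : Fin m → A, c w (List.ofFn u) • H (f ℓ x) (wordBasis f (List.ofFn u) x) := by
          have e0 : ∀ u : Fin m → A, opD f (ℓ :: List.ofFn u) h x
              = fderiv ℝ (opD f (List.ofFn u) h) x (f ℓ x) := fun u => rfl
          simp only [e0]
          have e1 : (∑ u : Fin m → A, c w (List.ofFn u) • fderiv ℝ (opD f (List.ofFn u) h) x) (f ℓ x)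
              = ∑ u : Fin m → A, c w (List.ofFn u) • fderiv ℝ (opD f (List.ofFn u) h) x (f ℓ x) := by
            simp only [ContinuousLinearMap.coe_sum', Finset.sum_apply,
              ContinuousLinearMap.coe_smul', Pi.smul_apply]
          rw [← e1, ← fderiv_sum_smul _ (fun u => dOP _ h hh)]
          have e2 : (fun y => ∑ u : Fin m → A, c w (List.ofFn u) • opD f (List.ofFn u) h y)
              = fun y => ∑ u : Fin m → A, c w (List.ofFn u) • fderiv ℝ h y (wordBasis f (List.ofFn u) y) := by
            funext y
            exact (IH2 h hh y).symm
          rw [e2]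
          have e3 : fderiv ℝ (fun y => ∑ u : Fin m → A,
              c w (List.ofFn u) • fderiv ℝ h y (wordBasis f (List.ofFn u) y)) x
              = ∑ u : Fin m → A, c w (List.ofFn u) •
                  ((fderiv ℝ h x).comp (fderiv ℝ (wordBasis f (List.ofFn u)) x)
                    + H.flip (wordBasis f (List.ofFn u) x)) := by
            refine (fderiv_fun_sum (fun u _ => DifferentiableAt.const_smul
              ((dh' x).clm_apply ((dWB (List.ofFn u)) x)) (c w (List.ofFn u)))).trans ?_
            refine Finset.sum_congr rfl fun u _ => ?_
            rw [fderiv_const_smul ((dh' x).clm_apply ((dWB (List.ofFn u)) x))]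
            congr 1
            rw [hH]
            exact fderiv_clm_apply (dh' x) ((dWB (List.ofFn u)) x)
          rw [e3]
          simp only [ContinuousLinearMap.coe_sum', Finset.sum_apply,
            ContinuousLinearMap.coe_smul', Pi.smul_apply, ContinuousLinearMap.add_apply,
            ContinuousLinearMap.coe_comp', Function.comp_apply,
            ContinuousLinearMap.flip_apply, smul_add]
          rw [Finset.sum_add_distrib]
          rfl
        rw [hR1, hE1, hR2]
        abel

end Main

end DSW

/-- Dynkin–Specht–Wever identity for word basis functions. For a finite
alphabet `A`, smooth maps `f_ℓ : ℂ^D → ℂ^D`, and `β ∈ 𝔤`, for every `n ≥ 1` and `x`: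
`Σ_{w ∈ Aⁿ} β_w f_w(x) = (1/n) Σ_{ℓ₁⋯ℓ_n ∈ Aⁿ} β_{ℓ₁⋯ℓ_n} [[⋯[[f_{ℓ₁},f_{ℓ₂}],f_{ℓ₃}]⋯],f_{ℓ_n}](x)`. -/
theorem stmt7 {A : Type*} [Fintype A] {D : ℕ}
    (f : A → (Fin D → ℂ) → (Fin D → ℂ)) (hf : ∀ ℓ : A, ContDiff ℝ (⊤ : ℕ∞) (f ℓ))
    (β : List A → ℂ) (hβ : isLie β) (n : ℕ) (hn : 1 ≤ n) (x : Fin D → ℂ) :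
    ∑ w : Fin n → A, β (List.ofFn w) • wordBasis f (List.ofFn w) x =
      ((n : ℂ)⁻¹) • ∑ w : Fin n → A,
        β (List.ofFn w) • iterLie ((List.ofFn w).map f) x := by
  classical
  have hne : ∀ w : Fin n → A, (List.ofFn w) ≠ [] := by
    intro w h
    have := congrArg List.length h
    simp at this
    omega
  have hn0 : (n : ℂ) ≠ 0 := Nat.cast_ne_zero.mpr (by omega)
  have step1 : ∀ w : Fin n → A, iterLie ((List.ofFn w).map f) x
      = ∑ u : Fin n → A, DSW.c (List.ofFn w) (List.ofFn u) • wordBasis f (List.ofFn u) x :=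
    fun w => (DSW.main_ind f hf (List.ofFn w) (hne w) n List.length_ofFn).1 x
  have hRHS : (∑ w : Fin n → A, β (List.ofFn w) • iterLie ((List.ofFn w).map f) x)
      = (n : ℂ) • ∑ w : Fin n → A, β (List.ofFn w) • wordBasis f (List.ofFn w) x := by
    calc ∑ w : Fin n → A, β (List.ofFn w) • iterLie ((List.ofFn w).map f) x
        = ∑ w : Fin n → A, ∑ u : Fin n → A,
            (DSW.c (List.ofFn w) (List.ofFn u) • β (List.ofFn w)) •
              wordBasis f (List.ofFn u) x := by
          refine Finset.sum_congr rfl fun w _ => ?_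
          rw [step1 w, Finset.smul_sum]
          refine Finset.sum_congr rfl fun u _ => ?_
          rw [smul_comm, smul_assoc]
      _ = ∑ u : Fin n → A, (∑ w : Fin n → A,
            DSW.c (List.ofFn w) (List.ofFn u) • β (List.ofFn w)) •
              wordBasis f (List.ofFn u) x := by
          rw [Finset.sum_comm]
          exact Finset.sum_congr rfl fun u _ => (Finset.sum_smul).symm
      _ = ∑ u : Fin n → A, ((n : ℂ) * β (List.ofFn u)) • wordBasis f (List.ofFn u) x := by
          refine Finset.sum_congr rfl fun u _ => ?_
          rw [DSW.partA β hβ n (List.ofFn u) List.length_ofFn (hne u)]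
      _ = (n : ℂ) • ∑ u : Fin n → A, β (List.ofFn u) • wordBasis f (List.ofFn u) x := by
          rw [Finset.smul_sum]
          exact Finset.sum_congr rfl fun u _ => mul_smul _ _ _
  rw [hRHS, inv_smul_smul₀ hn0]
end

section
/- Let v ∈ ℂ^d and β ∈ 𝔤, and assume there is a letter 𝟘 ∈ A with ν^v_𝟘 = 0 and β_𝟘 ≠ 0. Then there is at most one β̄ ∈ 𝔤 satisfying the two conditions: (i) ξ_v β̄ + [β,β̄] = 0, and (ii) β̄_{ℓ₁⋯ℓ_n} = β_{ℓ₁⋯ℓ_n} for every nonempty word ℓ₁⋯ℓ_n with ν^v_{ℓ₁} = ⋯ = ν^v_{ℓ_n} = 0; i.e., any two elements of 𝔤 satisfying (i) and (ii) coincide. -/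
open scoped BigOperators

/-!
Let `D = β̄ - β̄'`. By linearity `ξ_v D + [β, D] = 0`, and `D` vanishes on `∅` and on nonempty
words of `ν^v`-null letters. Induct on the length of words. If `D` vanishes on all shorter words,
every term of `[β, D]_w` vanishes (the extreme ones since `β_∅ = D_∅ = 0`), so
`ν^v_w D_w = 0`. If `ν^v_w = 0` and `w = u a`, the equation at the word `𝟘 u a` (also of weight
zero) leaves `β_𝟘 D_{u a} = D_{𝟘 u} β_a`. As `β_𝟘 ≠ 0`, `D_w` vanishes once `D_{𝟘 u}` does;
iterating moves null letters `𝟘` in from the left until the word consists of null letters only.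
-/

section

variable {A : Type*}

lemma conv_sub_left (x y z : List A → ℂ) : conv (x - y) z = conv x z - conv y z := by
  funext w
  simp [conv, sub_mul, Finset.sum_sub_distrib]

lemma conv_sub_right (x y z : List A → ℂ) : conv x (y - z) = conv x y - conv x z := by
  funext w
  simp [conv, mul_sub, Finset.sum_sub_distrib]

section Weights

variable {d : ℕ} (ν : Fin d → A → ℂ) (v : Fin d → ℂ)

lemma xiOp_sub (x y : List A → ℂ) : xiOp ν v (x - y) = xiOp ν v x - xiOp ν v y := by
  funext w
  simp [xiOp, mul_sub]

lemma nuW_cons (a : A) (w : List A) : nuW ν v (a :: w) = nuL ν v a + nuW ν v w := by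
  simp [nuW]

lemma nuW_singleton (a : A) : nuW ν v [a] = nuL ν v a := by
  simp [nuW]

end Weights

section Commutator

variable {β D : List A → ℂ}

lemma commutator_apply_eq_zero_of_forall_length_lt (hβ : β [] = 0) (hD : D [] = 0)
    {w : List A} (hshort : ∀ x : List A, x.length < w.length → D x = 0) :
    (conv β D - conv D β) w = 0 := by
  simp only [Pi.sub_apply, conv, ← Finset.sum_sub_distrib]
  refine Finset.sum_eq_zero fun i hi => ?_
  rw [Finset.mem_range] at hi
  rcases Nat.eq_zero_or_pos i with rfl | hi0
  · simp [hβ, hD]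
  rcases (Nat.lt_succ_iff.mp hi).eq_or_lt with rfl | hiw
  · simp [hβ, hD]
  rw [hshort (w.drop i) (by simp; omega), hshort (w.take i) (by simp; omega)]
  ring

lemma commutator_apply_cons_append_singleton (hβ : β [] = 0) {ℓ a : A} {u : List A}
    (hu : u ≠ []) (hDℓ : D [ℓ] = 0) (hshort : ∀ x : List A, x.length ≤ u.length → D x = 0) :
    (conv β D - conv D β) (ℓ :: (u ++ [a])) = β [ℓ] * D (u ++ [a]) - D (ℓ :: u) * β [a] := by
  have hu₀ : 0 < u.length := List.length_pos_iff.mpr hu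
  have hDa : D [a] = 0 := hshort [a] hu₀
  have hD : D [] = 0 := hshort [] (Nat.zero_le _)
  simp only [Pi.sub_apply, conv, ← Finset.sum_sub_distrib]
  rw [Finset.sum_eq_add_of_mem 1 (u.length + 1) (by simp) (by simp) (by omega)]
  · simp [hDℓ, hDa, sub_eq_add_neg]
  intro i hi ⟨hi1, hiu⟩
  rw [Finset.mem_range] at hi
  simp only [List.length_cons, List.length_append, List.length_nil] at hi
  rcases Nat.eq_zero_or_pos i with rfl | hi0
  · simp [hβ, hD]
  rcases (Nat.lt_succ_iff.mp hi).eq_or_lt with rfl | hiw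
  · simp [hβ, hD]
  have htake : (List.take i (ℓ :: (u ++ [a]))).length ≤ u.length := by simp; omega
  rw [hshort _ (by simp; omega), hshort _ htake]
  ring

end Commutator

section Uniqueness

variable {d : ℕ} {ν : Fin d → A → ℂ} {v : Fin d → ℂ} {β D : List A → ℂ}

lemma nuW_mul_eq_zero_of_forall_length_lt (hβ : β [] = 0) (hD : D [] = 0)
    (heq : xiOp ν v D + (conv β D - conv D β) = 0)
    {w : List A} (hshort : ∀ x : List A, x.length < w.length → D x = 0) :
    nuW ν v w * D w = 0 := by
  have hw := congrFun heq w
  rwa [Pi.add_apply, commutator_apply_eq_zero_of_forall_length_lt hβ hD hshort, add_zero] at hw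

lemma mul_apply_append_singleton_eq_apply_cons_mul {ℓ₀ : A} (hℓ₀ : nuL ν v ℓ₀ = 0) (hβ : β [] = 0)
    (hDℓ₀ : D [ℓ₀] = 0) (heq : xiOp ν v D + (conv β D - conv D β) = 0)
    {a : A} {u : List A} (hu : u ≠ []) (hν : nuW ν v (u ++ [a]) = 0)
    (hshort : ∀ x : List A, x.length ≤ u.length → D x = 0) :
    β [ℓ₀] * D (u ++ [a]) = D (ℓ₀ :: u) * β [a] := by
  have h := congrFun heq (ℓ₀ :: (u ++ [a]))
  rw [Pi.add_apply, commutator_apply_cons_append_singleton hβ hu hDℓ₀ hshort] at h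
  simp only [xiOp, nuW_cons, hℓ₀, hν, add_zero, zero_mul, zero_add, Pi.zero_apply] at h
  exact sub_eq_zero.mp h

lemma apply_append_eq_zero_of_forall_length_lt {ℓ₀ : A} (hℓ₀ : nuL ν v ℓ₀ = 0)
    (hβ₀ : β [ℓ₀] ≠ 0) (hβ : β [] = 0) (hD : D [] = 0)
    (hnull : ∀ w : List A, w ≠ [] → (∀ ℓ ∈ w, nuL ν v ℓ = 0) → D w = 0)
    (heq : xiOp ν v D + (conv β D - conv D β) = 0) {n : ℕ}
    (hshort : ∀ x : List A, x.length < n → D x = 0) (t : List A) :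
    ∀ s : List A, (∀ ℓ ∈ s, nuL ν v ℓ = 0) → (s ++ t).length = n → D (s ++ t) = 0 := by
  induction t using List.reverseRecOn with
  | nil =>
    intro s hs _
    rcases eq_or_ne s [] with rfl | hs₀
    · exact hD
    · simpa using hnull s hs₀ hs
  | append_singleton t a ih =>
    intro s hs hlen
    have hshort' : ∀ x : List A, x.length < (s ++ (t ++ [a])).length → D x = 0 := hlen ▸ hshort
    rw [← List.append_assoc] at hshort' ⊢
    by_cases hν : nuW ν v (s ++ t ++ [a]) = 0
    swap
    · exact (mul_eq_zero.mp
        (nuW_mul_eq_zero_of_forall_length_lt hβ hD heq hshort')).resolve_left hν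
    rcases eq_or_ne (s ++ t) [] with hst | hst
    · rw [hst] at hν ⊢
      exact hnull [a] (List.cons_ne_nil _ _) (by simpa [nuW_singleton] using hν)
    have hDℓ₀ : D [ℓ₀] = 0 := hnull [ℓ₀] (List.cons_ne_nil _ _) (by simpa using hℓ₀)
    have hrot := mul_apply_append_singleton_eq_apply_cons_mul hℓ₀ hβ hDℓ₀ heq hst hν
      (fun x hx => hshort' x (by simp at hx ⊢; omega))
    have hrest : D (ℓ₀ :: (s ++ t)) = 0 :=
      ih (ℓ₀ :: s) (by simpa [hℓ₀] using hs) (by simp at hlen ⊢; omega)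
    rw [hrest, zero_mul] at hrot
    exact (mul_eq_zero.mp hrot).resolve_left hβ₀

theorem eq_zero_of_xiOp_add_commutator_eq_zero {ℓ₀ : A} (hℓ₀ : nuL ν v ℓ₀ = 0)
    (hβ₀ : β [ℓ₀] ≠ 0) (hβ : β [] = 0) (hD : D [] = 0)
    (hnull : ∀ w : List A, w ≠ [] → (∀ ℓ ∈ w, nuL ν v ℓ = 0) → D w = 0)
    (heq : xiOp ν v D + (conv β D - conv D β) = 0) :
    D = 0 := by
  suffices h : ∀ n : ℕ, ∀ x : List A, x.length < n → D x = 0 by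
    funext w
    exact h (w.length + 1) w (Nat.lt_succ_self _)
  intro n
  induction n with
  | zero => exact fun x hx => absurd hx (Nat.not_lt_zero _)
  | succ n ih =>
    intro x hx
    rcases (Nat.lt_succ_iff.mp hx).eq_or_lt with hxn | hxn
    · exact apply_append_eq_zero_of_forall_length_lt hℓ₀ hβ₀ hβ hD hnull heq ih x []
        (by simp) (by simpa using hxn)
    · exact ih x hxn

end Uniqueness

end

theorem stmt17_general {A : Type*} {d : ℕ} (ν : Fin d → A → ℂ)
    (v : Fin d → ℂ) (β : List A → ℂ) (hβ : isLie β)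
    (ℓ₀ : A) (hℓ₀ : nuL ν v ℓ₀ = 0) (hβ₀ : β [ℓ₀] ≠ 0)
    (βbar βbar' : List A → ℂ) (hβbar : isLie βbar) (hβbar' : isLie βbar')
    (hi : xiOp ν v βbar + (conv β βbar - conv βbar β) = 0)
    (hi' : xiOp ν v βbar' + (conv β βbar' - conv βbar' β) = 0)
    (hii : ∀ w : List A, w ≠ [] → (∀ ℓ ∈ w, nuL ν v ℓ = 0) → βbar w = β w)
    (hii' : ∀ w : List A, w ≠ [] → (∀ ℓ ∈ w, nuL ν v ℓ = 0) → βbar' w = β w) :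
    βbar = βbar' := by
  have heq : xiOp ν v (βbar - βbar') + (conv β (βbar - βbar') - conv (βbar - βbar') β) = 0 := by
    rw [xiOp_sub, conv_sub_left, conv_sub_right]
    linear_combination hi - hi'
  refine sub_eq_zero.mp (eq_zero_of_xiOp_add_commutator_eq_zero hℓ₀ hβ₀ hβ.1 ?_ ?_ heq)
  · simp [hβbar.1, hβbar'.1]
  · intro w hw hnull
    simp [hii w hw hnull, hii' w hw hnull]

/-- Assume there is a letter `𝟘` with `ν^v_𝟘 = 0` and `β_𝟘 ≠ 0`. Then
there is at most one `β̄ ∈ 𝔤` with (i) `ξ_v β̄ + [β,β̄] = 0` and (ii) `β̄_w = β_w` for each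
nonempty word `w` all of whose letters `ℓ` satisfy `ν^v_ℓ = 0`. -/
theorem stmt17 {A : Type*} [Countable A] {d : ℕ} (hd : 1 ≤ d) (ν : Fin d → A → ℂ)
    (v : Fin d → ℂ) (β : List A → ℂ) (hβ : isLie β)
    (ℓ₀ : A) (hℓ₀ : nuL ν v ℓ₀ = 0) (hβ₀ : β [ℓ₀] ≠ 0)
    (βbar βbar' : List A → ℂ) (hβbar : isLie βbar) (hβbar' : isLie βbar')
    (hi : xiOp ν v βbar + (conv β βbar - conv βbar β) = 0)
    (hi' : xiOp ν v βbar' + (conv β βbar' - conv βbar' β) = 0)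
    (hii : ∀ w : List A, w ≠ [] → (∀ ℓ ∈ w, nuL ν v ℓ = 0) → βbar w = β w)
    (hii' : ∀ w : List A, w ≠ [] → (∀ ℓ ∈ w, nuL ν v ℓ = 0) → βbar' w = β w) :
    βbar = βbar' :=
  stmt17_general ν v β hβ ℓ₀ hℓ₀ hβ₀ βbar βbar' hβbar hβbar' hi hi' hii hii'
end
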